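/- Suppose (i) f = g ∘ ℬ, where ℬ : E₁ → E₃ is a continuous linear map into a finite-dimensional real inner product space E₃ and g : E₃ → ℝ is differentiable and α_g-strongly convex, and (ii) R_Q is the indicator function of a nonempty compact convex polytope ℱ = {q ∈ E : 𝒞q ≤ b}, where 𝒞 : E → ℝᵖ is a linear map and b ∈ ℝᵖ. Assume the augmented Lagrangian L_ρ has a saddle point, and assume ρ ≥ α_g. Then there exists a constant σ > 0 such that Problem (OP) satisfies the primal quadratic gap property with parameter α_S = α_g/σ: for every q ∈ ℱ, the nearest optimal solution q* := argmin_{p∈𝒫*}‖q − p‖ satisfies, for all w ∈ E₂, ⟨q* − q, ∇_q S(q,w)⟩ ≤ S(q*,w) − S(q,w) − (α_g/(2σ))‖q* − q‖². -/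

import Mathlib

/-!
The saddle point is a feasible optimal point, and strong convexity of `g` forces `ℬx` to take a
single value `t₀` on `𝒫*`; hence `𝒫* = {q | 𝒞q ≤ b, 𝒦q = 0, ℬx = t₀}` is a polyhedron, and
Hoffman's error bound gives `‖q* - q‖² ≤ σ (‖𝒦q‖² + ‖ℬx* - ℬx‖²)` for `q ∈ ℱ`.
Since `S(·, w)` is `g ∘ ℬ` plus a linear term plus `(ρ/2)‖𝒦·‖²`, its first-order gap at `q*` is
at least `(α_g/2)‖ℬx* - ℬx‖² + (ρ/2)‖𝒦q‖²`, which dominates `(α_g/2σ)‖q* - q‖²` when `ρ ≥ α_g`.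

For Hoffman's bound, the residual `q - p` of the projection `p` onto a polyhedron lies in the polar
of the cone of feasible directions at `p`. On that polar cone the positive parts of the active
constraints together with the equality residual dominate the norm, by compactness of the unit
sphere, and there are only finitely many possible sets of active constraints.
-/

open scoped RealInnerProductSpace
noncomputable section

variable {E₁ E₂ E₃ : Type*}
  [NormedAddCommGroup E₁] [InnerProductSpace ℝ E₁] [FiniteDimensional ℝ E₁]
  [NormedAddCommGroup E₂] [InnerProductSpace ℝ E₂] [FiniteDimensional ℝ E₂]
  [NormedAddCommGroup E₃] [InnerProductSpace ℝ E₃] [FiniteDimensional ℝ E₃]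

/-- first component of a point of `E := E₁ ×₂ E₂` -/
def xPart (q : WithLp 2 (E₁ × E₂)) : E₁ := (WithLp.equiv 2 (E₁ × E₂) q).1

/-- The constraint map `𝒦(x,y) := 𝒜x − y`, as a continuous linear map. -/
def Kmap (A : E₁ →L[ℝ] E₂) : WithLp 2 (E₁ × E₂) →L[ℝ] E₂ :=
  (A.comp (ContinuousLinearMap.fst ℝ E₁ E₂) - ContinuousLinearMap.snd ℝ E₁ E₂).comp
    (WithLp.prodContinuousLinearEquiv 2 ℝ E₁ E₂).toContinuousLinearMap

/-- The smooth part of the augmented Lagrangian,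
`S(q,w) := f(x) + ⟨w, 𝒦q⟩ + (ρ/2)‖𝒦q‖²`. -/
def SAL (f : E₁ → ℝ) (A : E₁ →L[ℝ] E₂) (ρ : ℝ) (q : WithLp 2 (E₁ × E₂)) (w : E₂) : ℝ :=
  f (xPart q) + ⟪w, Kmap A q⟫ + ρ / 2 * ‖Kmap A q‖ ^ 2

/-- objective of Problem (OP): `h(q) := f(x) + R_Q(q)` -/
def hOP (f : E₁ → ℝ) (RQ : WithLp 2 (E₁ × E₂) → EReal) (q : WithLp 2 (E₁ × E₂)) : EReal :=
  (f (xPart q) : EReal) + RQ q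

/-- the augmented Lagrangian `L_ρ(q,w) := f(x) + R_Q(q) + ⟨w,𝒦q⟩ + (ρ/2)‖𝒦q‖²` -/
def AL (f : E₁ → ℝ) (RQ : WithLp 2 (E₁ × E₂) → EReal) (A : E₁ →L[ℝ] E₂) (ρ : ℝ)
    (q : WithLp 2 (E₁ × E₂)) (w : E₂) : EReal :=
  hOP f RQ q + ((⟪w, Kmap A q⟫ + ρ / 2 * ‖Kmap A q‖ ^ 2 : ℝ) : EReal)

/-- saddle point of the augmented Lagrangian -/
def IsSaddle (f : E₁ → ℝ) (RQ : WithLp 2 (E₁ × E₂) → EReal) (A : E₁ →L[ℝ] E₂) (ρ : ℝ)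
    (qs : WithLp 2 (E₁ × E₂)) (ws : E₂) : Prop :=
  ∀ q : WithLp 2 (E₁ × E₂), ∀ w : E₂,
    AL f RQ A ρ qs w ≤ AL f RQ A ρ qs ws ∧ AL f RQ A ρ qs ws ≤ AL f RQ A ρ q ws

/-- set of optimal solutions of Problem (OP) -/
def OptSet (f : E₁ → ℝ) (RQ : WithLp 2 (E₁ × E₂) → EReal) (A : E₁ →L[ℝ] E₂) :
    Set (WithLp 2 (E₁ × E₂)) :=
  {q | Kmap A q = 0 ∧ ∀ p, Kmap A p = 0 → hOP f RQ q ≤ hOP f RQ p}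

open Filter Topology

section Hoffman

variable {E G ι : Type*} [NormedAddCommGroup E] [InnerProductSpace ℝ E]
  [NormedAddCommGroup G] [NormedSpace ℝ G]

def polyhedron (C : E →ₗ[ℝ] ι → ℝ) (b : ι → ℝ) (L : E →L[ℝ] G) (l : G) : Set E :=
  {z | C z ≤ b ∧ L z = l}

variable (C : E →ₗ[ℝ] ι → ℝ) (b : ι → ℝ) (L : E →L[ℝ] G) (l : G)

lemma isClosed_polyhedron [FiniteDimensional ℝ E] : IsClosed (polyhedron C b L l) :=
  (isClosed_le C.continuous_of_finiteDimensional continuous_const).inter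
    (isClosed_eq L.continuous continuous_const)

lemma convex_polyhedron : Convex ℝ (polyhedron C b L l) :=
  ((convex_Iic b).linear_preimage C).inter ((convex_singleton l).linear_preimage L.toLinearMap)

lemma inner_nonpos_of_feasible_direction [Finite ι] {p v : E} (hp : p ∈ polyhedron C b L l)
    (hv : ∀ z ∈ polyhedron C b L l, ⟪v, z - p⟫ ≤ 0) {u : E} (hu : ∀ i, C p i = b i → C u i ≤ 0)
    (hLu : L u = 0) : ⟪v, u⟫ ≤ 0 := by
  have hfeas : ∀ᶠ ε in 𝓝[>] (0 : ℝ), p + ε • u ∈ polyhedron C b L l := by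
    have hC : ∀ i, ∀ᶠ ε in 𝓝[>] (0 : ℝ), C p i + ε * C u i ≤ b i := by
      intro i
      rcases (hp.1 i).eq_or_lt with hact | hslack
      · filter_upwards [self_mem_nhdsWithin] with ε (hε : 0 < ε)
        nlinarith [hu i hact]
      · have hcont : Tendsto (fun ε : ℝ => C p i + ε * C u i) (𝓝 0) (𝓝 (C p i)) :=
          (by fun_prop : Continuous fun ε : ℝ => C p i + ε * C u i).tendsto' 0 _ (by simp)
        exact nhdsWithin_le_nhds (hcont.eventually (eventually_le_nhds hslack))
    filter_upwards [eventually_all.2 hC] with ε hε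
    exact ⟨fun i => by simpa using hε i, by simp [hp.2, hLu]⟩
  obtain ⟨ε, hεP, hε⟩ := (hfeas.and self_mem_nhdsWithin).exists
  have := hv _ hεP
  rw [add_sub_cancel_left, real_inner_smul_right] at this
  exact nonpos_of_mul_nonpos_left (by linarith) (hε : (0 : ℝ) < ε)

lemma eventually_norm_le_of_polar [FiniteDimensional ℝ E] (J : Finset ι) :
    ∀ᶠ c in atTop, ∀ v : E, (∀ u, (∀ i ∈ J, C u i ≤ 0) → L u = 0 → ⟪v, u⟫ ≤ 0) →
      ‖v‖ ≤ c * (∑ i ∈ J, max (C v i) 0 + ‖L v‖) := by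
  set N := {v : E | ∀ u, (∀ i ∈ J, C u i ≤ 0) → L u = 0 → ⟪v, u⟫ ≤ 0}
  set φ : E → ℝ := fun v => ∑ i ∈ J, max (C v i) 0 + ‖L v‖
  have hφ : Continuous φ := by
    have := C.continuous_of_finiteDimensional
    fun_prop
  have hφ_smul : ∀ t : ℝ, 0 ≤ t → ∀ v, φ (t • v) = t * φ v := by
    intro t ht v
    simp only [φ, map_smul, Pi.smul_apply, smul_eq_mul, norm_smul, Real.norm_of_nonneg ht,
      mul_add, Finset.mul_sum, mul_max_of_nonneg _ _ ht, mul_zero]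
  have hN : IsClosed N := by
    simp only [N, Set.ofPred_forall]
    exact isClosed_iInter fun u => isClosed_iInter fun _ => isClosed_iInter fun _ =>
      isClosed_le (continuous_id.inner continuous_const) continuous_const
  -- on the polar cone `φ` vanishes only at `0`, since `φ v ≤ 0` makes `v` a direction of the cone
  have hpos : ∀ v ∈ Metric.sphere (0 : E) 1 ∩ N, 0 < φ v := by
    rintro v ⟨hv1, hvN⟩
    by_contra! hφv
    have hterm : ∀ i ∈ J, max (C v i) 0 ≤ φ v := fun i hi =>
      (Finset.single_le_sum (fun j _ => le_max_right (C v j) 0) hi).trans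
        (le_add_of_nonneg_right (norm_nonneg _))
    have hsum : 0 ≤ ∑ i ∈ J, max (C v i) 0 := Finset.sum_nonneg fun i _ => le_max_right _ _
    have hself := hvN v (fun i hi => (le_max_left _ _).trans ((hterm i hi).trans hφv))
      (norm_le_zero_iff.1 (by linarith))
    rw [real_inner_self_eq_norm_sq, mem_sphere_zero_iff_norm.1 hv1] at hself
    norm_num at hself
  obtain ⟨μ, hμ, hμφ⟩ :=
    ((isCompact_sphere 0 1).inter_right hN).exists_forall_le' hφ.continuousOn hpos
  filter_upwards [eventually_ge_atTop μ⁻¹] with c hc v hv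
  rcases eq_or_ne v 0 with rfl | hv0
  · simp
  have hvpos : 0 < ‖v‖ := norm_pos_iff.2 hv0
  have hunit : ‖v‖⁻¹ • v ∈ Metric.sphere (0 : E) 1 ∩ N := by
    refine ⟨by simp [norm_smul, hvpos.ne'], fun u hu hLu => ?_⟩
    rw [real_inner_smul_left]
    exact mul_nonpos_of_nonneg_of_nonpos (by positivity) (hv u hu hLu)
  have := hμφ _ hunit
  rw [hφ_smul _ (by positivity), inv_mul_eq_div, le_div_iff₀ hvpos] at this
  have hφv : 0 ≤ φ v := by positivity
  calc ‖v‖ ≤ μ⁻¹ * φ v := by rw [le_inv_mul_iff₀ hμ]; linarith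
    _ ≤ c * φ v := by gcongr

theorem hoffman_bound [FiniteDimensional ℝ E] [Fintype ι] (hne : (polyhedron C b L l).Nonempty) :
    ∃ σ > 0, ∀ q, ∃ p ∈ polyhedron C b L l,
      ‖q - p‖ ≤ σ * (∑ i, max (C q i - b i) 0 + ‖L q - l‖) := by
  classical
  obtain ⟨σ, hσ, hσpos⟩ := ((eventually_all.2 fun J =>
    eventually_norm_le_of_polar C L J).and (eventually_gt_atTop 0)).exists
  refine ⟨σ, hσpos, fun q => ?_⟩
  have hconv := convex_polyhedron C b L l
  obtain ⟨p, hp, hpq⟩ := exists_norm_eq_iInf_of_complete_convex hne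
    (isClosed_polyhedron C b L l).isComplete hconv q
  have hnormal := (norm_eq_iInf_iff_real_inner_le_zero hconv hp).1 hpq
  set J := Finset.univ.filter fun i => C p i = b i
  have hJ : ∀ i ∈ J, C (q - p) i = C q i - b i := fun i hi => by
    simp [(Finset.mem_filter.1 hi).2]
  refine ⟨p, hp, ?_⟩
  calc ‖q - p‖ ≤ σ * (∑ i ∈ J, max (C (q - p) i) 0 + ‖L (q - p)‖) :=
        hσ J (q - p) fun u hu hLu => inner_nonpos_of_feasible_direction C b L l hp hnormal
          (fun i hi => hu i (Finset.mem_filter.2 ⟨Finset.mem_univ i, hi⟩)) hLu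
    _ = σ * (∑ i ∈ J, max (C q i - b i) 0 + ‖L q - l‖) := by
        rw [Finset.sum_congr rfl fun i hi => by rw [hJ i hi], map_sub, hp.2]
    _ ≤ σ * (∑ i, max (C q i - b i) 0 + ‖L q - l‖) := by
        gcongr ?_ * (?_ + _)
        exact Finset.sum_le_sum_of_subset_of_nonneg (Finset.subset_univ J)
          fun i _ _ => le_max_right (C q i - b i) 0

end Hoffman

section StrongConvexity

variable {E : Type*} [NormedAddCommGroup E] [InnerProductSpace ℝ E] [CompleteSpace E]
  {g : E → ℝ} {α : ℝ}

lemma midpoint_add_le_of_strongConvex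
    (hg : ∀ u v : E, g v ≥ g u + ⟪gradient g u, v - u⟫ + α / 2 * ‖v - u‖ ^ 2) (u v : E) :
    g (midpoint ℝ u v) + α / 8 * ‖u - v‖ ^ 2 ≤ (g u + g v) / 2 := by
  have hu := hg (midpoint ℝ u v) u
  have hv := hg (midpoint ℝ u v) v
  rw [left_sub_midpoint] at hu
  rw [right_sub_midpoint, ← neg_sub u v, smul_neg, inner_neg_right, norm_neg] at hv
  simp only [invOf_eq_inv, norm_smul, mul_pow, norm_inv, Real.norm_ofNat] at hu hv
  linarith

lemma eq_of_le_midpoint_of_strongConvex (hα : 0 < α)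
    (hg : ∀ u v : E, g v ≥ g u + ⟪gradient g u, v - u⟫ + α / 2 * ‖v - u‖ ^ 2) {u v : E}
    (hu : g u ≤ g (midpoint ℝ u v)) (hv : g v ≤ g (midpoint ℝ u v)) : u = v := by
  have := midpoint_add_le_of_strongConvex hg u v
  have : ‖u - v‖ ^ 2 ≤ 0 := by nlinarith
  simpa [sub_eq_zero] using (sq_nonpos_iff _).1 this

end StrongConvexity

section FeasibleSet

variable {E₁ E₂ : Type*} {f : E₁ → ℝ} {RQ : WithLp 2 (E₁ × E₂) → EReal}
  {F : Set (WithLp 2 (E₁ × E₂))} {q : WithLp 2 (E₁ × E₂)}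

lemma xPart_eq_fst (q : WithLp 2 (E₁ × E₂)) : xPart q = q.fst := rfl

lemma hOP_of_mem (hRQ : ∀ q, (q ∈ F → RQ q = 0) ∧ (q ∉ F → RQ q = ⊤)) (hq : q ∈ F) :
    hOP f RQ q = f (xPart q) := by
  rw [hOP, (hRQ q).1 hq, add_zero]

lemma hOP_of_not_mem (hRQ : ∀ q, (q ∈ F → RQ q = 0) ∧ (q ∉ F → RQ q = ⊤)) (hq : q ∉ F) :
    hOP f RQ q = ⊤ := by
  rw [hOP, (hRQ q).2 hq, EReal.coe_add_top]

end FeasibleSet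

section AugmentedLagrangian

variable {E₁ E₂ E₃ : Type*}
  [NormedAddCommGroup E₁] [InnerProductSpace ℝ E₁]
  [NormedAddCommGroup E₂] [InnerProductSpace ℝ E₂]
  [NormedAddCommGroup E₃] [InnerProductSpace ℝ E₃]
  {f : E₁ → ℝ} {RQ : WithLp 2 (E₁ × E₂) → EReal} {A : E₁ →L[ℝ] E₂} {ρ : ℝ}
  {F : Set (WithLp 2 (E₁ × E₂))} {q : WithLp 2 (E₁ × E₂)} {w : E₂}

lemma AL_of_mem (hRQ : ∀ q, (q ∈ F → RQ q = 0) ∧ (q ∉ F → RQ q = ⊤)) (hq : q ∈ F) :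
    AL f RQ A ρ q w = SAL f A ρ q w := by
  rw [AL, hOP_of_mem hRQ hq, ← EReal.coe_add, SAL, add_assoc]

lemma AL_of_not_mem (hRQ : ∀ q, (q ∈ F → RQ q = 0) ∧ (q ∉ F → RQ q = ⊤)) (hq : q ∉ F) :
    AL f RQ A ρ q w = ⊤ := by
  rw [AL, hOP_of_not_mem hRQ hq, EReal.top_add_coe]

lemma AL_of_kmap_eq_zero (hq : Kmap A q = 0) : AL f RQ A ρ q w = hOP f RQ q := by
  simp [AL, hq]

lemma IsSaddle.mem (hRQ : ∀ q, (q ∈ F → RQ q = 0) ∧ (q ∉ F → RQ q = ⊤)) (hFne : F.Nonempty)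
    {qs : WithLp 2 (E₁ × E₂)} {ws : E₂} (hs : IsSaddle f RQ A ρ qs ws) : qs ∈ F := by
  obtain ⟨qF, hqF⟩ := hFne
  by_contra h
  have := (hs qF ws).2
  rw [AL_of_not_mem hRQ h, AL_of_mem hRQ hqF] at this
  exact EReal.coe_ne_top _ (top_le_iff.1 this)

lemma IsSaddle.kmap_eq_zero (hRQ : ∀ q, (q ∈ F → RQ q = 0) ∧ (q ∉ F → RQ q = ⊤))
    {qs : WithLp 2 (E₁ × E₂)} {ws : E₂} (hs : IsSaddle f RQ A ρ qs ws) (hqs : qs ∈ F) :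
    Kmap A qs = 0 := by
  -- raising the multiplier along `𝒦 qs` raises `L_ρ` by `‖𝒦 qs‖²`
  have := (hs qs (ws + Kmap A qs)).1
  rw [AL_of_mem hRQ hqs, AL_of_mem hRQ hqs, EReal.coe_le_coe_iff, SAL, SAL, inner_add_left,
    real_inner_self_eq_norm_sq] at this
  exact norm_eq_zero.1 ((sq_nonpos_iff _).1 (by linarith))

lemma IsSaddle.mem_optSet {qs : WithLp 2 (E₁ × E₂)} {ws : E₂} (hs : IsSaddle f RQ A ρ qs ws)
    (hK : Kmap A qs = 0) : qs ∈ OptSet f RQ A :=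
  ⟨hK, fun p hp => by
    simpa only [AL_of_kmap_eq_zero hK, AL_of_kmap_eq_zero hp] using (hs p ws).2⟩

lemma optSet_subset (hRQ : ∀ q, (q ∈ F → RQ q = 0) ∧ (q ∉ F → RQ q = ⊤))
    {q₀ : WithLp 2 (E₁ × E₂)} (hq₀F : q₀ ∈ F) (hq₀ : Kmap A q₀ = 0) : OptSet f RQ A ⊆ F := by
  intro z hz
  by_contra h
  have := hz.2 q₀ hq₀
  rw [hOP_of_not_mem hRQ h, hOP_of_mem hRQ hq₀F] at this
  exact EReal.coe_ne_top _ (top_le_iff.1 this)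

lemma map_eq_of_mem_optSet [CompleteSpace E₃] (hRQ : ∀ q, (q ∈ F → RQ q = 0) ∧ (q ∉ F → RQ q = ⊤))
    (hFconv : Convex ℝ F) {g : E₃ → ℝ} {B : E₁ →L[ℝ] E₃} (hf : f = fun x => g (B x))
    {α : ℝ} (hα : 0 < α)
    (hg : ∀ u v : E₃, g v ≥ g u + ⟪gradient g u, v - u⟫ + α / 2 * ‖v - u‖ ^ 2)
    {a b : WithLp 2 (E₁ × E₂)} (ha : a ∈ OptSet f RQ A) (hb : b ∈ OptSet f RQ A)
    (haF : a ∈ F) (hbF : b ∈ F) : B (xPart a) = B (xPart b) := by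
  set m := midpoint ℝ a b
  have hmF : m ∈ F := hFconv.midpoint_mem haF hbF
  have hKm : Kmap A m = 0 := by
    change (Kmap A).toLinearMap.toAffineMap (midpoint ℝ a b) = 0
    rw [AffineMap.map_midpoint]
    simp [ha.1, hb.1]
  have hBm : B (xPart m) = midpoint ℝ (B (xPart a)) (B (xPart b)) :=
    (B ∘L WithLp.fstL 2 ℝ E₁ E₂).toLinearMap.toAffineMap.map_midpoint a b
  have hle : ∀ c ∈ OptSet f RQ A, c ∈ F → g (B (xPart c)) ≤ g (B (xPart m)) := by
    intro c hc hcF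
    have := hc.2 m hKm
    rwa [hOP_of_mem hRQ hcF, hOP_of_mem hRQ hmF, EReal.coe_le_coe_iff, hf] at this
  exact eq_of_le_midpoint_of_strongConvex hα hg (hBm ▸ hle a ha haF) (hBm ▸ hle b hb hbF)

lemma optSet_eq [CompleteSpace E₃] (hRQ : ∀ q, (q ∈ F → RQ q = 0) ∧ (q ∉ F → RQ q = ⊤))
    (hFconv : Convex ℝ F) {g : E₃ → ℝ} {B : E₁ →L[ℝ] E₃} (hf : f = fun x => g (B x))
    {α : ℝ} (hα : 0 < α)
    (hg : ∀ u v : E₃, g v ≥ g u + ⟪gradient g u, v - u⟫ + α / 2 * ‖v - u‖ ^ 2)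
    {q₀ : WithLp 2 (E₁ × E₂)} (hq₀F : q₀ ∈ F) (hq₀ : q₀ ∈ OptSet f RQ A) :
    OptSet f RQ A = {z | z ∈ F ∧ Kmap A z = 0 ∧ B (xPart z) = B (xPart q₀)} := by
  ext z
  constructor
  · intro hz
    have hzF := optSet_subset hRQ hq₀F hq₀.1 hz
    exact ⟨hzF, hz.1, map_eq_of_mem_optSet hRQ hFconv hf hα hg hz hq₀ hzF hq₀F⟩
  · rintro ⟨hzF, hKz, hBz⟩
    have : hOP f RQ z = hOP f RQ q₀ := by
      simp only [hOP_of_mem hRQ hzF, hOP_of_mem hRQ hq₀F, hf, hBz]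
    exact ⟨hKz, this ▸ hq₀.2⟩

lemma inner_gradient_SAL_add_le [CompleteSpace E₁] [CompleteSpace E₂] [CompleteSpace E₃]
    {g : E₃ → ℝ} {B : E₁ →L[ℝ] E₃} (hf : f = fun x => g (B x)) (hgdiff : Differentiable ℝ g)
    {α : ℝ} (hg : ∀ u v : E₃, g v ≥ g u + ⟪gradient g u, v - u⟫ + α / 2 * ‖v - u‖ ^ 2)
    (q q' : WithLp 2 (E₁ × E₂)) (w : E₂) :
    ⟪q' - q, gradient (fun z => SAL f A ρ z w) q⟫ + α / 2 * ‖B (xPart q') - B (xPart q)‖ ^ 2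
      + ρ / 2 * ‖Kmap A q' - Kmap A q‖ ^ 2 ≤ SAL f A ρ q' w - SAL f A ρ q w := by
  subst hf
  set BX := B ∘L WithLp.fstL 2 ℝ E₁ E₂
  have hS : HasFDerivAt (fun z => SAL (fun x => g (B x)) A ρ z w)
      ((fderiv ℝ g (BX q)).comp BX + (innerSL ℝ w).comp (Kmap A)
        + (ρ / 2) • (2 • (innerSL ℝ (Kmap A q)).comp (Kmap A))) q :=
    (((hgdiff _).hasFDerivAt.comp q BX.hasFDerivAt).add
      ((innerSL ℝ w).comp (Kmap A)).hasFDerivAt).add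
      ((Kmap A).hasFDerivAt.norm_sq.const_mul (ρ / 2))
  have hBX : ∀ z, BX z = B (xPart z) := fun _ => rfl
  have hgq := hg (BX q) (BX q')
  rw [gradient, InnerProductSpace.toDual_symm_apply] at hgq
  rw [hS.hasGradientAt.gradient, real_inner_comm, InnerProductSpace.toDual_symm_apply]
  simp only [SAL, add_apply, smul_apply, ContinuousLinearMap.comp_apply, innerSL_apply_apply,
    map_sub, smul_eq_mul, nsmul_eq_mul, Nat.cast_ofNat, norm_sub_sq_real, hBX,
    real_inner_self_eq_norm_sq, real_inner_comm (Kmap A q) (Kmap A q')] at hgq ⊢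
  linarith

lemma exists_sq_norm_sub_le_of_nearest [FiniteDimensional ℝ E₁] [FiniteDimensional ℝ E₂]
    [CompleteSpace E₃] (hRQ : ∀ q, (q ∈ F → RQ q = 0) ∧ (q ∉ F → RQ q = ⊤)) {ι : Type*}
    [Fintype ι] {C : WithLp 2 (E₁ × E₂) →ₗ[ℝ] ι → ℝ} {b : ι → ℝ}
    (hF : F = {q | ∀ i, C q i ≤ b i}) {g : E₃ → ℝ} {B : E₁ →L[ℝ] E₃}
    (hf : f = fun x => g (B x)) {α : ℝ} (hα : 0 < α)
    (hg : ∀ u v : E₃, g v ≥ g u + ⟪gradient g u, v - u⟫ + α / 2 * ‖v - u‖ ^ 2)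
    {q₀ : WithLp 2 (E₁ × E₂)} (hq₀F : q₀ ∈ F) (hq₀ : q₀ ∈ OptSet f RQ A) :
    ∃ σ > 0, ∀ q ∈ F, ∀ qs ∈ OptSet f RQ A, (∀ pt ∈ OptSet f RQ A, ‖q - qs‖ ≤ ‖q - pt‖) →
      ‖qs - q‖ ^ 2 ≤ σ * (‖Kmap A qs - Kmap A q‖ ^ 2 + ‖B (xPart qs) - B (xPart q)‖ ^ 2) := by
  subst hF
  have hFconv : Convex ℝ {q | ∀ i, C q i ≤ b i} := (convex_Iic b).linear_preimage C
  set L := (Kmap A).prod (B ∘L WithLp.fstL 2 ℝ E₁ E₂)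
  have hOpt : OptSet f RQ A = polyhedron C b L (0, B (xPart q₀)) := by
    rw [optSet_eq hRQ hFconv hf hα hg hq₀F hq₀]
    ext z
    simp [polyhedron, L, Pi.le_def, Prod.ext_iff, and_comm, xPart_eq_fst]
  obtain ⟨σ, hσ, hbound⟩ := hoffman_bound C b L (0, B (xPart q₀)) (hOpt ▸ ⟨q₀, hq₀⟩)
  refine ⟨σ ^ 2, by positivity, fun q hq qs hqs hnear => ?_⟩
  obtain ⟨p, hp, hqp⟩ := hbound q
  rw [hOpt] at hqs hnear
  have hviol : ∑ i, max (C q i - b i) 0 = 0 :=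
    Finset.sum_eq_zero fun i _ => max_eq_right (sub_nonpos.2 (hq i))
  have hdist : ‖qs - q‖ ≤ σ * max ‖Kmap A qs - Kmap A q‖ ‖B (xPart qs) - B (xPart q)‖ :=
    calc ‖qs - q‖ = ‖q - qs‖ := norm_sub_rev _ _
      _ ≤ ‖q - p‖ := hnear p hp
      _ ≤ σ * ‖L qs - L q‖ := by simpa [hviol, ← hqs.2, norm_sub_rev] using hqp
      _ = _ := by rw [Prod.norm_def]; rfl
  have hmax : ∀ x y : ℝ, 0 ≤ x → 0 ≤ y → max x y ^ 2 ≤ x ^ 2 + y ^ 2 := fun x y hx hy => by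
    rcases le_total x y with h | h <;> simp [h] <;> positivity
  calc ‖qs - q‖ ^ 2 ≤ (σ * max ‖Kmap A qs - Kmap A q‖ ‖B (xPart qs) - B (xPart q)‖) ^ 2 :=
        pow_le_pow_left₀ (norm_nonneg _) hdist 2
    _ ≤ σ ^ 2 * (‖Kmap A qs - Kmap A q‖ ^ 2 + ‖B (xPart qs) - B (xPart q)‖ ^ 2) := by
        rw [mul_pow]
        gcongr
        exact hmax _ _ (norm_nonneg _) (norm_nonneg _)

end AugmentedLagrangian

theorem pqg_of_polytope_general (g : E₃ → ℝ) (B : E₁ →L[ℝ] E₃) (f : E₁ → ℝ) (hf : f = fun x => g (B x))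
    (αg : ℝ) (hαg : 0 < αg) (hgdiff : Differentiable ℝ g)
    (hgsc : ∀ u v : E₃, g v ≥ g u + ⟪gradient g u, v - u⟫ + αg / 2 * ‖v - u‖ ^ 2)
    (p : ℕ) (C : WithLp 2 (E₁ × E₂) →ₗ[ℝ] (Fin p → ℝ)) (b : Fin p → ℝ)
    (F : Set (WithLp 2 (E₁ × E₂))) (hF : F = {q | ∀ i, C q i ≤ b i})
    (hFne : F.Nonempty)
    (RQ : WithLp 2 (E₁ × E₂) → EReal)
    (hRQ : ∀ q, (q ∈ F → RQ q = 0) ∧ (q ∉ F → RQ q = ⊤))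
    (A : E₁ →L[ℝ] E₂) (ρ : ℝ) (hρ : ρ ≥ αg)
    (hsaddle : ∃ qs ws, IsSaddle f RQ A ρ qs ws) :
    ∃ σ : ℝ, 0 < σ ∧
      ∀ q ∈ F, ∀ qs ∈ OptSet f RQ A,
        (∀ pt ∈ OptSet f RQ A, ‖q - qs‖ ≤ ‖q - pt‖) →  -- `qs` is the nearest optimal solution
        ∀ w : E₂,
          ⟪qs - q, gradient (fun q' => SAL f A ρ q' w) q⟫ ≤
            SAL f A ρ qs w - SAL f A ρ q w - αg / (2 * σ) * ‖qs - q‖ ^ 2 := by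
  obtain ⟨q₀, w₀, hsaddle⟩ := hsaddle
  have hq₀F := hsaddle.mem hRQ hFne
  have hq₀ := hsaddle.mem_optSet (hsaddle.kmap_eq_zero hRQ hq₀F)
  obtain ⟨σ, hσ, hdist⟩ := exists_sq_norm_sub_le_of_nearest hRQ hF hf hαg hgsc hq₀F hq₀
  refine ⟨σ, hσ, fun q hq qs hqs hnear w => ?_⟩
  have hgap := inner_gradient_SAL_add_le (A := A) (ρ := ρ) hf hgdiff hgsc q qs w
  have hqs := hdist q hq qs hqs hnear
  set ΔK := ‖Kmap A qs - Kmap A q‖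
  set ΔB := ‖B (xPart qs) - B (xPart q)‖
  have hquad : αg / (2 * σ) * ‖qs - q‖ ^ 2 ≤ αg / 2 * ΔB ^ 2 + ρ / 2 * ΔK ^ 2 :=
    calc αg / (2 * σ) * ‖qs - q‖ ^ 2 ≤ αg / (2 * σ) * (σ * (ΔK ^ 2 + ΔB ^ 2)) := by gcongr
      _ = αg / 2 * ΔB ^ 2 + αg / 2 * ΔK ^ 2 := by field_simp; ring
      _ ≤ αg / 2 * ΔB ^ 2 + ρ / 2 * ΔK ^ 2 := by gcongr
  linarith

/-- under the polytope/strongly-convex-composite assumptions and `ρ ≥ α_g`,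
Problem (OP) satisfies the primal quadratic gap property with parameter `α_S = α_g/σ`
for some `σ > 0`. -/
theorem pqg_of_polytope (g : E₃ → ℝ) (B : E₁ →L[ℝ] E₃) (f : E₁ → ℝ) (hf : f = fun x => g (B x))
    (αg : ℝ) (hαg : 0 < αg) (hgdiff : Differentiable ℝ g)
    (hgsc : ∀ u v : E₃, g v ≥ g u + ⟪gradient g u, v - u⟫ + αg / 2 * ‖v - u‖ ^ 2)
    (p : ℕ) (C : WithLp 2 (E₁ × E₂) →ₗ[ℝ] (Fin p → ℝ)) (b : Fin p → ℝ)
    (F : Set (WithLp 2 (E₁ × E₂))) (hF : F = {q | ∀ i, C q i ≤ b i})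
    (hFne : F.Nonempty) (hFcpt : IsCompact F)
    (RQ : WithLp 2 (E₁ × E₂) → EReal)
    (hRQ : ∀ q, (q ∈ F → RQ q = 0) ∧ (q ∉ F → RQ q = ⊤))
    (A : E₁ →L[ℝ] E₂) (ρ : ℝ) (hρ : ρ ≥ αg)
    (hsaddle : ∃ qs ws, IsSaddle f RQ A ρ qs ws) :
    ∃ σ : ℝ, 0 < σ ∧
      ∀ q ∈ F, ∀ qs ∈ OptSet f RQ A,
        (∀ pt ∈ OptSet f RQ A, ‖q - qs‖ ≤ ‖q - pt‖) →  -- `qs` is the nearest optimal solution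
        ∀ w : E₂,
          ⟪qs - q, gradient (fun q' => SAL f A ρ q' w) q⟫ ≤
            SAL f A ρ qs w - SAL f A ρ q w - αg / (2 * σ) * ‖qs - q‖ ^ 2 :=
  pqg_of_polytope_general g B f hf αg hαg hgdiff hgsc p C b F hF hFne RQ hRQ A ρ hρ hsaddle

end
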